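/- For a positive integer d and integer k with 0 <= k <= d-1, the Gaussian binomial coefficient [d-1 choose k]_{q} is congruent to (-1)^k * q^{-k(k+1)/2} modulo the d-th cyclotomic polynomial Phi_d(q) (equivalently, q^{k(k+1)/2} * [d-1 choose k]_q ≡ (-1)^k mod Phi_d(q)). -/

import Mathlib

/-!
Write `b k` for the value of `[d-1 choose k]_q` at a primitive `d`-th root of unity `ζ`.
The `q`-analogue of `(k+1) C(n,k+1) = (n-k) C(n,k)` gives
`(ζ^(k+1) - 1) b (k+1) = (ζ^(d-1-k) - 1) b k = -ζ^(-(k+1)) (ζ^(k+1) - 1) b k`,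
and `ζ^(k+1) ≠ 1` for `k + 1 < d`, so `b (k+1) = -ζ^(-(k+1)) b k`; by induction
`ζ^(k(k+1)/2) b k = (-1)^k`. Since `Φ_d` is the minimal polynomial of `ζ` over `ℤ`,
the congruence follows.
-/

open Polynomial

noncomputable def qbinom : ℕ → ℕ → Polynomial ℤ
  | _, 0 => 1
  | 0, _ + 1 => 0
  | n + 1, k + 1 => qbinom n k + Polynomial.X ^ (k + 1) * qbinom n (k + 1)

lemma qbinom_zero_right (n : ℕ) : qbinom n 0 = 1 := by cases n <;> rfl

lemma qbinom_succ_succ (n k : ℕ) :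
    qbinom (n + 1) (k + 1) = qbinom n k + X ^ (k + 1) * qbinom n (k + 1) := rfl

lemma qbinom_eq_zero_of_lt : ∀ {n k : ℕ}, n < k → qbinom n k = 0
  | 0, _ + 1, _ => rfl
  | n + 1, k + 1, h => by
      rw [qbinom_succ_succ, qbinom_eq_zero_of_lt (by omega : n < k),
        qbinom_eq_zero_of_lt (by omega : n < k + 1)]
      ring

lemma X_pow_succ_sub_one_mul_qbinom_succ : ∀ n k : ℕ,
    (X ^ (k + 1) - 1) * qbinom n (k + 1) = (X ^ (n - k) - 1) * qbinom n k
  | 0, k => by simp [qbinom_eq_zero_of_lt (Nat.succ_pos k)]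
  | n + 1, 0 => by
      have ih := X_pow_succ_sub_one_mul_qbinom_succ n 0
      simp only [qbinom_succ_succ, qbinom_zero_right, Nat.sub_zero, mul_one] at ih ⊢
      linear_combination X * ih
  | n + 1, k + 1 => by
      rcases le_or_gt n k with hnk | hkn
      · rw [qbinom_eq_zero_of_lt (by omega : n + 1 < k + 1 + 1), Nat.sub_eq_zero_of_le (by omega)]
        simp
      · have ih₁ := X_pow_succ_sub_one_mul_qbinom_succ n (k + 1)
        have ih₂ := X_pow_succ_sub_one_mul_qbinom_succ n k
        have hX : (X : ℤ[X]) ^ (k + 1 + 1) * X ^ (n - (k + 1)) = X ^ (k + 1) * X ^ (n - k) := by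
          rw [← pow_add, ← pow_add]; congr 1; omega
        rw [qbinom_succ_succ, qbinom_succ_succ, Nat.add_sub_add_right]
        linear_combination X ^ (k + 1 + 1) * ih₁ + ih₂ + qbinom n (k + 1) * hX

lemma triangle_succ (k : ℕ) : (k + 1) * (k + 2) / 2 = k * (k + 1) / 2 + (k + 1) := by
  rw [show (k + 1) * (k + 2) = k * (k + 1) + (k + 1) * 2 by ring,
    Nat.add_mul_div_right _ _ two_pos]

lemma IsPrimitiveRoot.pow_triangle_mul_eval_qbinom {R : Type*} [CommRing R] [IsDomain R]
    {ζ : R} {d : ℕ} (hζ : IsPrimitiveRoot ζ d) :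
    ∀ k, k ≤ d - 1 → ζ ^ (k * (k + 1) / 2) * (qbinom (d - 1) k).eval₂ (Int.castRingHom R) ζ
      = (-1) ^ k
  | 0, _ => by simp [qbinom_zero_right]
  | k + 1, hk => by
      set b : ℕ → R := fun j ↦ (qbinom (d - 1) j).eval₂ (Int.castRingHom R) ζ
      have ih : ζ ^ (k * (k + 1) / 2) * b k = (-1) ^ k :=
        hζ.pow_triangle_mul_eval_qbinom k (by omega)
      have hratio : (ζ ^ (k + 1) - 1) * b (k + 1) = (ζ ^ (d - 1 - k) - 1) * b k := by
        simpa using congrArg (eval₂ (Int.castRingHom R) ζ)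
          (X_pow_succ_sub_one_mul_qbinom_succ (d - 1) k)
      have hζd : ζ ^ (k + 1) * ζ ^ (d - 1 - k) = 1 := by
        rw [← pow_add, show k + 1 + (d - 1 - k) = d by omega, hζ.pow_eq_one]
      have hne : ζ ^ (k + 1) - 1 ≠ 0 :=
        sub_ne_zero.mpr (hζ.pow_ne_one_of_pos_of_lt k.succ_ne_zero (by omega))
      refine mul_left_cancel₀ hne ?_
      rw [triangle_succ, pow_add]
      linear_combination ζ ^ (k * (k + 1) / 2) * ζ ^ (k + 1) * hratio
        - (ζ ^ (k + 1) - 1) * ih + ζ ^ (k * (k + 1) / 2) * b k * hζd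

theorem stmt_18 (d k : ℕ) (hd : 0 < d) (hk : k ≤ d - 1) :
    Polynomial.cyclotomic d ℤ ∣
      Polynomial.X ^ (k * (k + 1) / 2) * qbinom (d - 1) k - (-1) ^ k := by
  have hζ := Complex.isPrimitiveRoot_exp d hd.ne'
  rw [cyclotomic_eq_minpoly hζ hd]
  refine minpoly.isIntegrallyClosed_dvd (hζ.isIntegral hd) ?_
  simpa [aeval_def, sub_eq_zero, eval₂_pow, eval₂_neg, eval₂_one] using hζ.pow_triangle_mul_eval_qbinom k hk
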